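/- arXiv:1612.08998 — 6 statements merged into one kernel-verified Lean document; each statement's English description precedes it below -/
import Mathlib

section
/- Let E and F be real inner product spaces, let T > 0 and λ, μ > 0 be real numbers, and let w : ℝ → E and g : ℝ → F be continuously differentiable on [0, T] with w(0) = 0 and g(0) = 0. Then the quantity a := ∫₀ᵀ ( λ⟨w′(t), w(t)⟩_E + μ‖w′(t)‖²_E + λ‖g(t)‖²_F + μ⟨g(t), g′(t)⟩_F ) dt satisfies the identity a = λ∫₀ᵀ‖g(t)‖² dt + μ∫₀ᵀ‖w′(t)‖² dt + (λ/2)‖w(T)‖² + (μ/2)‖g(T)‖², and consequently a ≥ (1/2) ( λ∫₀ᵀ‖g(t)‖² dt + μ∫₀ᵀ‖w′(t)‖² dt + λ‖w(T)‖² + μ‖g(T)‖² ). -/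
/-! Both cross terms are exact derivatives, `⟪f, f'⟫ = (‖f‖² / 2)'`, so integrating them
from the zero initial values leaves the energies `‖w T‖² / 2` and `‖g T‖² / 2`; the inequality
then only discards half of the two nonnegative integrals. -/

open Set intervalIntegral

theorem integral_inner_self_deriv {E : Type*} [NormedAddCommGroup E] [InnerProductSpace ℝ E]
    {a b : ℝ} {f f' : ℝ → E} (hf : ∀ t ∈ uIcc a b, HasDerivAt f (f' t) t)
    (hf' : ContinuousOn f' (uIcc a b)) :
    ∫ t in a..b, inner ℝ (f t) (f' t) = (‖f b‖ ^ 2 - ‖f a‖ ^ 2) / 2 := by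
  have hcont : ContinuousOn f (uIcc a b) := fun t ht =>
    (hf t ht).continuousAt.continuousWithinAt
  have hsq : ∀ t ∈ uIcc a b, HasDerivAt (‖f ·‖ ^ 2 / 2) (inner ℝ (f t) (f' t)) t := fun t ht => by
    simpa using ((hf t ht).norm_sq).div_const 2
  rw [integral_eq_sub_of_hasDerivAt hsq ((hcont.inner hf').intervalIntegrable)]
  ring

theorem stmt_0 {E F : Type*} [NormedAddCommGroup E] [InnerProductSpace ℝ E]
    [NormedAddCommGroup F] [InnerProductSpace ℝ F]
    (T lam mu : ℝ) (hT : 0 < T) (hlam : 0 < lam) (hmu : 0 < mu)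
    (w w' : ℝ → E) (g g' : ℝ → F)
    (hw : ∀ t ∈ Set.Icc (0:ℝ) T, HasDerivAt w (w' t) t)
    (hg : ∀ t ∈ Set.Icc (0:ℝ) T, HasDerivAt g (g' t) t)
    (hwc : ContinuousOn w' (Set.Icc (0:ℝ) T))
    (hgc : ContinuousOn g' (Set.Icc (0:ℝ) T))
    (hw0 : w 0 = 0) (hg0 : g 0 = 0) :
    (∫ t in (0:ℝ)..T,
        (lam * (inner ℝ (w' t) (w t) : ℝ) + mu * ‖w' t‖ ^ 2
          + lam * ‖g t‖ ^ 2 + mu * (inner ℝ (g t) (g' t) : ℝ)))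
      = lam * (∫ t in (0:ℝ)..T, ‖g t‖ ^ 2)
        + mu * (∫ t in (0:ℝ)..T, ‖w' t‖ ^ 2)
        + (lam / 2) * ‖w T‖ ^ 2 + (mu / 2) * ‖g T‖ ^ 2
    ∧ (1 / 2) * (lam * (∫ t in (0:ℝ)..T, ‖g t‖ ^ 2)
        + mu * (∫ t in (0:ℝ)..T, ‖w' t‖ ^ 2)
        + lam * ‖w T‖ ^ 2 + mu * ‖g T‖ ^ 2)
      ≤ ∫ t in (0:ℝ)..T,
          (lam * (inner ℝ (w' t) (w t) : ℝ) + mu * ‖w' t‖ ^ 2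
            + lam * ‖g t‖ ^ 2 + mu * (inner ℝ (g t) (g' t) : ℝ)) := by
  rw [← uIcc_of_le hT.le] at hw hg hwc hgc
  have hwcont : ContinuousOn w (uIcc 0 T) := fun t ht => (hw t ht).continuousAt.continuousWithinAt
  have hgcont : ContinuousOn g (uIcc 0 T) := fun t ht => (hg t ht).continuousAt.continuousWithinAt
  have hW := integral_inner_self_deriv hw hwc
  have hG := integral_inner_self_deriv hg hgc
  simp only [real_inner_comm (w' _)] at hW
  have identity : (∫ t in (0:ℝ)..T,
        (lam * (inner ℝ (w' t) (w t) : ℝ) + mu * ‖w' t‖ ^ 2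
          + lam * ‖g t‖ ^ 2 + mu * (inner ℝ (g t) (g' t) : ℝ)))
      = lam * (∫ t in (0:ℝ)..T, ‖g t‖ ^ 2)
        + mu * (∫ t in (0:ℝ)..T, ‖w' t‖ ^ 2)
        + (lam / 2) * ‖w T‖ ^ 2 + (mu / 2) * ‖g T‖ ^ 2 := by
    rw [integral_add, integral_add, integral_add, integral_const_mul, integral_const_mul,
      integral_const_mul, integral_const_mul, hW, hG, hw0, hg0]
    · simp only [norm_zero]; ring
    all_goals exact ContinuousOn.intervalIntegrable (by fun_prop)
  have hg_sq : 0 ≤ ∫ t in (0:ℝ)..T, ‖g t‖ ^ 2 := integral_nonneg hT.le fun t _ => by positivity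
  have hw'_sq : 0 ≤ ∫ t in (0:ℝ)..T, ‖w' t‖ ^ 2 := integral_nonneg hT.le fun t _ => by positivity
  refine ⟨identity, ?_⟩
  rw [identity]
  linarith [mul_nonneg hlam.le hg_sq, mul_nonneg hmu.le hw'_sq]
end

section
/- Let E and F be real inner product spaces, let T > 0, δ > 0 and K ≥ 0 be real numbers, and let w, v : ℝ → E and g, h : ℝ → F be continuously differentiable on [0, T] with w(0) = 0. Assume the inverse-inequality hypothesis δ² ∫₀ᵀ‖h′(t)‖² dt ≤ K² ∫₀ᵀ‖h(t)‖² dt. Then | ∫₀ᵀ ( ⟨w′(t), v(t)⟩_E + δ⟨w′(t), v′(t)⟩_E + ⟨g(t), h(t)⟩_F + δ⟨g(t), h′(t)⟩_F ) dt | ≤ √(2·max{2, 1+K²}) · ( ∫₀ᵀ(‖g(t)‖² + δ‖w′(t)‖² + δ⁻¹‖w(t)‖²) dt + ‖w(T)‖² + δ‖g(T)‖² )^{1/2} · ( ∫₀ᵀ(‖h(t)‖² + δ‖v′(t)‖²) dt + ‖v(T)‖² + δ‖h(T)‖² )^{1/2}. -/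
/-!
Integrating `⟪w', v⟫` by parts (with `w 0 = 0`) trades it for the end-point term `⟪w T, v T⟫`
and `-∫ ⟪w, v'⟫`. Every remaining integral is then bounded by Cauchy–Schwarz, with the weights
distributed so that `δ⁻¹ ‖w‖²`, `δ ‖w'‖²` and `δ ‖v'‖²` appear, and the inverse inequality turns
`δ ‖h'‖` into `K ‖h‖`. A Cauchy–Schwarz inequality in `ℝ³` collects the five products; the
constant comes from `(a + b)² ≤ 2 (a² + b²)` and `(1 + K)² ≤ 2 (1 + K²)`.
-/

open Set intervalIntegral
open MeasureTheory (volume)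
open scoped RealInnerProductSpace

section

variable {E : Type*} [NormedAddCommGroup E] {a b : ℝ}

theorem integral_norm_sq_nonneg (hab : a ≤ b) (f : ℝ → E) : 0 ≤ ∫ t in a..b, ‖f t‖ ^ 2 :=
  integral_nonneg hab fun _ _ => sq_nonneg _

variable [InnerProductSpace ℝ E]

theorem abs_integral_inner_le_sqrt_mul_sqrt {f g : ℝ → E} (hab : a ≤ b)
    (hf : ContinuousOn f (Icc a b)) (hg : ContinuousOn g (Icc a b)) :
    |∫ t in a..b, ⟪f t, g t⟫|
      ≤ √(∫ t in a..b, ‖f t‖ ^ 2) * √(∫ t in a..b, ‖g t‖ ^ 2) := by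
  set A := ∫ t in a..b, ‖f t‖ ^ 2
  set B := ∫ t in a..b, ‖g t‖ ^ 2
  set D := ∫ t in a..b, ⟪f t, g t⟫
  have hA : 0 ≤ A := integral_norm_sq_nonneg hab f
  have hquad (s : ℝ) : 0 ≤ B * (s * s) + (-2 * D) * s + A := by
    have hexp : ∫ t in a..b, ‖f t - s • g t‖ ^ 2
        = ∫ t in a..b, (‖f t‖ ^ 2 - 2 * s * ⟪f t, g t⟫ + s ^ 2 * ‖g t‖ ^ 2) := by
      refine integral_congr fun t _ => ?_
      rw [norm_sub_sq_real, inner_smul_right, norm_smul, mul_pow, Real.norm_eq_abs, sq_abs]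
      ring
    have hpos := integral_norm_sq_nonneg hab fun t => f t - s • g t
    have hff : IntervalIntegrable (fun t => ‖f t‖ ^ 2) volume a b :=
      (hf.norm.pow 2).intervalIntegrable_of_Icc hab
    have hfg : IntervalIntegrable (fun t => ⟪f t, g t⟫) volume a b :=
      (hf.inner hg).intervalIntegrable_of_Icc hab
    have hgg : IntervalIntegrable (fun t => ‖g t‖ ^ 2) volume a b :=
      (hg.norm.pow 2).intervalIntegrable_of_Icc hab
    rw [hexp, integral_add (hff.sub (hfg.const_mul _)) (hgg.const_mul _),
      integral_sub hff (hfg.const_mul _), integral_const_mul, integral_const_mul] at hpos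
    linarith
  have hdisc := discrim_le_zero hquad
  rw [discrim] at hdisc
  rw [← Real.sqrt_mul hA, ← Real.sqrt_sq_eq_abs]
  exact Real.sqrt_le_sqrt (by nlinarith)

theorem integral_deriv_inner_eq_sub {u u' v v' : ℝ → E} (hab : a ≤ b)
    (hu : ∀ t ∈ Icc a b, HasDerivAt u (u' t) t) (hv : ∀ t ∈ Icc a b, HasDerivAt v (v' t) t)
    (hu' : ContinuousOn u' (Icc a b)) (hv' : ContinuousOn v' (Icc a b)) :
    ∫ t in a..b, ⟪u' t, v t⟫ = ⟪u b, v b⟫ - ⟪u a, v a⟫ - ∫ t in a..b, ⟪u t, v' t⟫ := by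
  have huv' : IntervalIntegrable (fun t => ⟪u t, v' t⟫) volume a b :=
    ((HasDerivAt.continuousOn hu).inner hv').intervalIntegrable_of_Icc hab
  have hu'v : IntervalIntegrable (fun t => ⟪u' t, v t⟫) volume a b :=
    (hu'.inner (HasDerivAt.continuousOn hv)).intervalIntegrable_of_Icc hab
  have hftc := integral_eq_sub_of_hasDerivAt
    (fun t ht => (hu t (uIcc_of_le hab ▸ ht)).inner ℝ (hv t (uIcc_of_le hab ▸ ht)))
    (huv'.add hu'v)
  rw [integral_add huv' hu'v] at hftc
  linarith

theorem abs_integral_inner_le_sqrt_inv_mul_mul_sqrt_mul {c : ℝ} {f g : ℝ → E} (hab : a ≤ b)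
    (hc : 0 < c) (hf : ContinuousOn f (Icc a b)) (hg : ContinuousOn g (Icc a b)) :
    |∫ t in a..b, ⟪f t, g t⟫|
      ≤ √(c⁻¹ * ∫ t in a..b, ‖f t‖ ^ 2) * √(c * ∫ t in a..b, ‖g t‖ ^ 2) := by
  have hf2 := integral_norm_sq_nonneg hab f
  rw [← Real.sqrt_mul (by positivity), mul_mul_mul_comm, inv_mul_cancel₀ hc.ne', one_mul,
    Real.sqrt_mul hf2]
  exact abs_integral_inner_le_sqrt_mul_sqrt hab hf hg

theorem abs_mul_integral_inner_le_sqrt_mul_mul_sqrt_mul {c : ℝ} {f g : ℝ → E} (hab : a ≤ b)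
    (hc : 0 ≤ c) (hf : ContinuousOn f (Icc a b)) (hg : ContinuousOn g (Icc a b)) :
    |c * ∫ t in a..b, ⟪f t, g t⟫|
      ≤ √(c * ∫ t in a..b, ‖f t‖ ^ 2) * √(c * ∫ t in a..b, ‖g t‖ ^ 2) := by
  rw [Real.sqrt_mul hc, Real.sqrt_mul hc, mul_mul_mul_comm, Real.mul_self_sqrt hc, abs_mul,
    abs_of_nonneg hc]
  exact mul_le_mul_of_nonneg_left (abs_integral_inner_le_sqrt_mul_sqrt hab hf hg) hc

theorem abs_mul_integral_inner_le_of_sq_mul_le {c K : ℝ} {f g k : ℝ → E} (hab : a ≤ b)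
    (hc : 0 ≤ c) (hK : 0 ≤ K) (hf : ContinuousOn f (Icc a b)) (hk : ContinuousOn k (Icc a b))
    (hkg : c ^ 2 * ∫ t in a..b, ‖k t‖ ^ 2 ≤ K ^ 2 * ∫ t in a..b, ‖g t‖ ^ 2) :
    |c * ∫ t in a..b, ⟪f t, k t⟫| ≤ K * (√(∫ t in a..b, ‖f t‖ ^ 2) * √(∫ t in a..b, ‖g t‖ ^ 2)) := by
  have hkg' : c * √(∫ t in a..b, ‖k t‖ ^ 2) ≤ K * √(∫ t in a..b, ‖g t‖ ^ 2) := by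
    rw [← Real.sqrt_sq hc, ← Real.sqrt_sq hK, ← Real.sqrt_mul (sq_nonneg _),
      ← Real.sqrt_mul (sq_nonneg _)]
    exact Real.sqrt_le_sqrt hkg
  have hcs := abs_integral_inner_le_sqrt_mul_sqrt hab hf hk
  rw [abs_mul, abs_of_nonneg hc]
  linarith [mul_le_mul_of_nonneg_left hcs hc,
    mul_le_mul_of_nonneg_left hkg' (Real.sqrt_nonneg (∫ t in a..b, ‖f t‖ ^ 2))]

end

theorem mul_add_add_mul_le_sqrt_mul_sqrt (K a₁ a₂ a₃ a₄ b₁ b₂ b₃ : ℝ) :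
    a₁ * b₁ + (a₂ + a₃) * b₂ + (1 + K) * a₄ * b₃
      ≤ √(2 * max 2 (1 + K ^ 2)) * √(a₁ ^ 2 + a₂ ^ 2 + a₃ ^ 2 + a₄ ^ 2)
        * √(b₁ ^ 2 + b₂ ^ 2 + b₃ ^ 2) := by
  have hcs := Real.sum_mul_le_sqrt_mul_sqrt Finset.univ
    ![a₁, a₂ + a₃, (1 + K) * a₄] ![b₁, b₂, b₃]
  simp only [Fin.sum_univ_three, Matrix.cons_val_zero, Matrix.cons_val_one,
    Matrix.cons_val_two, Matrix.head_cons, Matrix.tail_cons] at hcs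
  have hweights : a₁ ^ 2 + (a₂ + a₃) ^ 2 + ((1 + K) * a₄) ^ 2
      ≤ 2 * max 2 (1 + K ^ 2) * (a₁ ^ 2 + a₂ ^ 2 + a₃ ^ 2 + a₄ ^ 2) := by
    have h₂ := le_max_left 2 (1 + K ^ 2)
    have hK := le_max_right 2 (1 + K ^ 2)
    nlinarith [sq_nonneg (a₂ - a₃), sq_nonneg a₁, sq_nonneg a₂, sq_nonneg a₃, sq_nonneg a₄,
      mul_nonneg (sq_nonneg (1 - K)) (sq_nonneg a₄)]
  calc a₁ * b₁ + (a₂ + a₃) * b₂ + (1 + K) * a₄ * b₃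
      ≤ √(a₁ ^ 2 + (a₂ + a₃) ^ 2 + ((1 + K) * a₄) ^ 2) * √(b₁ ^ 2 + b₂ ^ 2 + b₃ ^ 2) := by
        simpa only [mul_assoc] using hcs
    _ ≤ √(2 * max 2 (1 + K ^ 2) * (a₁ ^ 2 + a₂ ^ 2 + a₃ ^ 2 + a₄ ^ 2))
          * √(b₁ ^ 2 + b₂ ^ 2 + b₃ ^ 2) := by gcongr
    _ = _ := by rw [Real.sqrt_mul (by positivity)]

theorem abs_sub_add_add_add_le_sqrt_mul_sqrt {K P J I₂ I₃ I₄ x₁ x₂ x₃ x₄ y₁ y₂ y₃ : ℝ}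
    (hP : |P| ≤ √x₁ * √y₁) (hJ : |J| ≤ √x₂ * √y₂) (hI₂ : |I₂| ≤ √x₃ * √y₂)
    (hI₃ : |I₃| ≤ √x₄ * √y₃) (hI₄ : |I₄| ≤ K * (√x₄ * √y₃))
    (hx₁ : 0 ≤ x₁) (hx₂ : 0 ≤ x₂) (hx₃ : 0 ≤ x₃) (hx₄ : 0 ≤ x₄)
    (hy₁ : 0 ≤ y₁) (hy₂ : 0 ≤ y₂) (hy₃ : 0 ≤ y₃) :
    |P - J + I₂ + I₃ + I₄|
      ≤ √(2 * max 2 (1 + K ^ 2)) * √(x₁ + x₂ + x₃ + x₄) * √(y₁ + y₂ + y₃) := by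
  have hcs := mul_add_add_mul_le_sqrt_mul_sqrt K (√x₁) (√x₂) (√x₃) (√x₄) (√y₁) (√y₂) (√y₃)
  rw [Real.sq_sqrt hx₁, Real.sq_sqrt hx₂, Real.sq_sqrt hx₃, Real.sq_sqrt hx₄, Real.sq_sqrt hy₁,
    Real.sq_sqrt hy₂, Real.sq_sqrt hy₃] at hcs
  rw [abs_le] at *
  constructor <;> linarith

theorem stmt_1_general {E F : Type*} [NormedAddCommGroup E] [InnerProductSpace ℝ E]
    [NormedAddCommGroup F] [InnerProductSpace ℝ F]
    (T δ K : ℝ) (hT : 0 < T) (hδ : 0 < δ) (hK : 0 ≤ K)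
    (w w' v v' : ℝ → E) (g g' h h' : ℝ → F)
    (hw : ∀ t ∈ Set.Icc (0:ℝ) T, HasDerivAt w (w' t) t)
    (hv : ∀ t ∈ Set.Icc (0:ℝ) T, HasDerivAt v (v' t) t)
    (hg : ∀ t ∈ Set.Icc (0:ℝ) T, HasDerivAt g (g' t) t)
    (hh : ∀ t ∈ Set.Icc (0:ℝ) T, HasDerivAt h (h' t) t)
    (hwc : ContinuousOn w' (Set.Icc (0:ℝ) T))
    (hvc : ContinuousOn v' (Set.Icc (0:ℝ) T))
    (hhc : ContinuousOn h' (Set.Icc (0:ℝ) T))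
    (hw0 : w 0 = 0)
    (hinv : δ ^ 2 * (∫ t in (0:ℝ)..T, ‖h' t‖ ^ 2)
      ≤ K ^ 2 * (∫ t in (0:ℝ)..T, ‖h t‖ ^ 2)) :
    |∫ t in (0:ℝ)..T,
        ((inner ℝ (w' t) (v t) : ℝ) + δ * (inner ℝ (w' t) (v' t) : ℝ)
          + (inner ℝ (g t) (h t) : ℝ) + δ * (inner ℝ (g t) (h' t) : ℝ))|
      ≤ Real.sqrt (2 * max 2 (1 + K ^ 2))
        * Real.sqrt ((∫ t in (0:ℝ)..T,
              (‖g t‖ ^ 2 + δ * ‖w' t‖ ^ 2 + δ⁻¹ * ‖w t‖ ^ 2))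
            + ‖w T‖ ^ 2 + δ * ‖g T‖ ^ 2)
        * Real.sqrt ((∫ t in (0:ℝ)..T, (‖h t‖ ^ 2 + δ * ‖v' t‖ ^ 2))
            + ‖v T‖ ^ 2 + δ * ‖h T‖ ^ 2) := by
  have hwC := HasDerivAt.continuousOn hw
  have hvC := HasDerivAt.continuousOn hv
  have hgC := HasDerivAt.continuousOn hg
  have hhC := HasDerivAt.continuousOn hh
  have hP : |⟪w T, v T⟫| ≤ √(‖w T‖ ^ 2) * √(‖v T‖ ^ 2) := by
    simpa using abs_real_inner_le_norm (w T) (v T)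
  have hW := integral_norm_sq_nonneg hT.le w
  have hW' := integral_norm_sq_nonneg hT.le w'
  have hV' := integral_norm_sq_nonneg hT.le v'
  have hG := integral_norm_sq_nonneg hT.le g
  have hH := integral_norm_sq_nonneg hT.le h
  simp (disch := exact ContinuousOn.intervalIntegrable_of_Icc hT.le (by fun_prop)) only
    [integral_add, integral_const_mul]
  rw [integral_deriv_inner_eq_sub hT.le hw hv hwc hvc, hw0, inner_zero_left, sub_zero]
  refine (abs_sub_add_add_add_le_sqrt_mul_sqrt hP
    (abs_integral_inner_le_sqrt_inv_mul_mul_sqrt_mul hT.le hδ hwC hvc)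
    (abs_mul_integral_inner_le_sqrt_mul_mul_sqrt_mul hT.le hδ.le hwc hvc)
    (abs_integral_inner_le_sqrt_mul_sqrt hT.le hgC hhC)
    (abs_mul_integral_inner_le_of_sq_mul_le hT.le hδ.le hK hgC hhc hinv)
    ?_ ?_ ?_ ?_ ?_ ?_ ?_).trans ?_
  any_goals positivity
  gcongr √_ * √?_ * √?_ <;> linarith [mul_nonneg hδ.le (sq_nonneg ‖g T‖),
    mul_nonneg hδ.le (sq_nonneg ‖h T‖)]

theorem stmt_1 {E F : Type*} [NormedAddCommGroup E] [InnerProductSpace ℝ E]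
    [NormedAddCommGroup F] [InnerProductSpace ℝ F]
    (T δ K : ℝ) (hT : 0 < T) (hδ : 0 < δ) (hK : 0 ≤ K)
    (w w' v v' : ℝ → E) (g g' h h' : ℝ → F)
    (hw : ∀ t ∈ Set.Icc (0:ℝ) T, HasDerivAt w (w' t) t)
    (hv : ∀ t ∈ Set.Icc (0:ℝ) T, HasDerivAt v (v' t) t)
    (hg : ∀ t ∈ Set.Icc (0:ℝ) T, HasDerivAt g (g' t) t)
    (hh : ∀ t ∈ Set.Icc (0:ℝ) T, HasDerivAt h (h' t) t)
    (hwc : ContinuousOn w' (Set.Icc (0:ℝ) T))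
    (hvc : ContinuousOn v' (Set.Icc (0:ℝ) T))
    (hgc : ContinuousOn g' (Set.Icc (0:ℝ) T))
    (hhc : ContinuousOn h' (Set.Icc (0:ℝ) T))
    (hw0 : w 0 = 0)
    (hinv : δ ^ 2 * (∫ t in (0:ℝ)..T, ‖h' t‖ ^ 2)
      ≤ K ^ 2 * (∫ t in (0:ℝ)..T, ‖h t‖ ^ 2)) :
    |∫ t in (0:ℝ)..T,
        ((inner ℝ (w' t) (v t) : ℝ) + δ * (inner ℝ (w' t) (v' t) : ℝ)
          + (inner ℝ (g t) (h t) : ℝ) + δ * (inner ℝ (g t) (h' t) : ℝ))|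
      ≤ Real.sqrt (2 * max 2 (1 + K ^ 2))
        * Real.sqrt ((∫ t in (0:ℝ)..T,
              (‖g t‖ ^ 2 + δ * ‖w' t‖ ^ 2 + δ⁻¹ * ‖w t‖ ^ 2))
            + ‖w T‖ ^ 2 + δ * ‖g T‖ ^ 2)
        * Real.sqrt ((∫ t in (0:ℝ)..T, (‖h t‖ ^ 2 + δ * ‖v' t‖ ^ 2))
            + ‖v T‖ ^ 2 + δ * ‖h T‖ ^ 2) :=
  stmt_1_general T δ K hT hδ hK w w' v v' g g' h h' hw hv hg hh hwc hvc hhc hw0 hinv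
end

section
/- Let λ, μ > 0, C_F ≥ 0, ζ ≥ 1/2, ε ≥ 1, and β₁, β₂ > 0 be real numbers, and let X₁, X₂, S₁, S₂, r, q, d, P ≥ 0 be nonnegative reals. If λX₁² + μX₂² + (1/2)(μS₂ + λS₁) ≤ (μ/2)(S₂/ε + ε d²) + (λ(r + C_F q) + μP)X₁ + μ q X₂, then (2 − 1/ζ)(λX₁² + μX₂²) + μ(1 − 1/ε)S₂ + λS₁ ≤ ε μ d² + ζ·[ λ( (1+β₁)((1+β₂)r² + (1 + 1/β₂)C_F² q²) + (1 + 1/β₁)(μ²/λ²)P² ) + μ q² ]. -/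
private lemma young_split (β x y : ℝ) (hβ : 0 < β) :
    (x + y) ^ 2 ≤ (1 + β) * x ^ 2 + (1 + 1 / β) * y ^ 2 := by
  have key : (1 + β) * x ^ 2 + (1 + 1 / β) * y ^ 2 - (x + y) ^ 2
      = (β * x - y) ^ 2 / β := by
    field_simp
    ring
  linarith [key, div_nonneg (sq_nonneg (β * x - y)) hβ.le]

set_option maxHeartbeats 1000000 in
theorem stmt_3 (lam mu C_F ζ ε β₁ β₂ X₁ X₂ S₁ S₂ r q d P : ℝ)
    (hlam : 0 < lam) (hmu : 0 < mu) (hCF : 0 ≤ C_F) (hζ : 1 / 2 ≤ ζ)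
    (hε : 1 ≤ ε) (hβ₁ : 0 < β₁) (hβ₂ : 0 < β₂)
    (hX₁ : 0 ≤ X₁) (hX₂ : 0 ≤ X₂) (hS₁ : 0 ≤ S₁) (hS₂ : 0 ≤ S₂)
    (hr : 0 ≤ r) (hq : 0 ≤ q) (hd : 0 ≤ d) (hP : 0 ≤ P)
    (h : lam * X₁ ^ 2 + mu * X₂ ^ 2 + (1 / 2) * (mu * S₂ + lam * S₁)
      ≤ (mu / 2) * (S₂ / ε + ε * d ^ 2)
        + (lam * (r + C_F * q) + mu * P) * X₁ + mu * q * X₂) :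
    (2 - 1 / ζ) * (lam * X₁ ^ 2 + mu * X₂ ^ 2) + mu * (1 - 1 / ε) * S₂ + lam * S₁
      ≤ ε * mu * d ^ 2
        + ζ * (lam * ((1 + β₁) * ((1 + β₂) * r ^ 2 + (1 + 1 / β₂) * C_F ^ 2 * q ^ 2)
                 + (1 + 1 / β₁) * (mu ^ 2 / lam ^ 2) * P ^ 2)
             + mu * q ^ 2) := by
  have hζ0 : 0 < ζ := lt_of_lt_of_le (by norm_num) hζ
  -- Young inequality for the X₂ term
  have h1 : 2 * (mu * q) * X₂ ≤ (1 / ζ) * (mu * X₂ ^ 2) + ζ * (mu * q ^ 2) := by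
    have key : (1 / ζ) * (mu * X₂ ^ 2) + ζ * (mu * q ^ 2) - 2 * (mu * q) * X₂
        = mu / ζ * (X₂ - ζ * q) ^ 2 := by
      field_simp
      ring
    linarith [key, mul_nonneg (div_nonneg hmu.le hζ0.le) (sq_nonneg (X₂ - ζ * q))]
  -- Young inequality for the X₁ term
  have h2 : 2 * (lam * (r + C_F * q) + mu * P) * X₁
      ≤ (1 / ζ) * (lam * X₁ ^ 2) + ζ * ((lam * (r + C_F * q) + mu * P) ^ 2 / lam) := by
    have key : (1 / ζ) * (lam * X₁ ^ 2) + ζ * ((lam * (r + C_F * q) + mu * P) ^ 2 / lam)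
        - 2 * (lam * (r + C_F * q) + mu * P) * X₁
        = (lam * X₁ - ζ * (lam * (r + C_F * q) + mu * P)) ^ 2 / (ζ * lam) := by
      field_simp
      ring
    linarith [key, div_nonneg (sq_nonneg (lam * X₁ - ζ * (lam * (r + C_F * q) + mu * P)))
      (mul_pos hζ0 hlam).le]
  -- bound the squared coefficient
  have ha2 : (lam * (r + C_F * q) + mu * P) ^ 2
      ≤ lam ^ 2 * ((1 + β₁) * ((1 + β₂) * r ^ 2 + (1 + 1 / β₂) * C_F ^ 2 * q ^ 2)
          + (1 + 1 / β₁) * (mu ^ 2 / lam ^ 2) * P ^ 2) := by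
    have hy1 := young_split β₁ (lam * (r + C_F * q)) (mu * P) hβ₁
    have hy2 := young_split β₂ r (C_F * q) hβ₂
    have hmul : (1 + β₁) * (lam * (r + C_F * q)) ^ 2
        ≤ (1 + β₁) * (lam ^ 2 * ((1 + β₂) * r ^ 2 + (1 + 1 / β₂) * (C_F * q) ^ 2)) := by
      have hb1 : (0:ℝ) ≤ (1 + β₁) * lam ^ 2 := by positivity
      have := mul_le_mul_of_nonneg_left hy2 hb1
      nlinarith [this]
    have hBexp : lam ^ 2 * ((1 + β₁) * ((1 + β₂) * r ^ 2 + (1 + 1 / β₂) * C_F ^ 2 * q ^ 2)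
          + (1 + 1 / β₁) * (mu ^ 2 / lam ^ 2) * P ^ 2)
        = (1 + β₁) * (lam ^ 2 * ((1 + β₂) * r ^ 2 + (1 + 1 / β₂) * (C_F * q) ^ 2))
          + (1 + 1 / β₁) * (mu * P) ^ 2 := by
      field_simp
    linarith [hy1, hmul, hBexp]
  have h3 : (lam * (r + C_F * q) + mu * P) ^ 2 / lam
      ≤ lam * ((1 + β₁) * ((1 + β₂) * r ^ 2 + (1 + 1 / β₂) * C_F ^ 2 * q ^ 2)
          + (1 + 1 / β₁) * (mu ^ 2 / lam ^ 2) * P ^ 2) := by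
    rw [div_le_iff₀ hlam]
    have hrw : lam * ((1 + β₁) * ((1 + β₂) * r ^ 2 + (1 + 1 / β₂) * C_F ^ 2 * q ^ 2)
          + (1 + 1 / β₁) * (mu ^ 2 / lam ^ 2) * P ^ 2) * lam
        = lam ^ 2 * ((1 + β₁) * ((1 + β₂) * r ^ 2 + (1 + 1 / β₂) * C_F ^ 2 * q ^ 2)
          + (1 + 1 / β₁) * (mu ^ 2 / lam ^ 2) * P ^ 2) := by ring
    rw [hrw]
    exact ha2
  have h4 : ζ * ((lam * (r + C_F * q) + mu * P) ^ 2 / lam)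
      ≤ ζ * (lam * ((1 + β₁) * ((1 + β₂) * r ^ 2 + (1 + 1 / β₂) * C_F ^ 2 * q ^ 2)
          + (1 + 1 / β₁) * (mu ^ 2 / lam ^ 2) * P ^ 2)) :=
    mul_le_mul_of_nonneg_left h3 hζ0.le
  -- the doubled hypothesis
  have h5 : 2 * (lam * X₁ ^ 2 + mu * X₂ ^ 2) + mu * S₂ + lam * S₁
      ≤ mu * (S₂ / ε) + ε * mu * d ^ 2
        + 2 * (lam * (r + C_F * q) + mu * P) * X₁ + 2 * (mu * q) * X₂ := by
    linarith [h]
  have h6 : mu * (1 - 1 / ε) * S₂ = mu * S₂ - mu * (S₂ / ε) := by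
    field_simp
  linarith [h1, h2, h4, h5, h6]
end

section
/- Let λ, μ > 0, C_F ≥ 0, γ ≥ 1/2, ρ₁ ≥ 1, ρ₂ ≥ 1, and α₁, α₂ > 0 be real numbers, let X₁, X₂, S₁, S₂, W₁, W₂, r, q, D ≥ 0 be nonnegative reals, and let J be a real number. If λX₁² + μX₂² + (1/2)( μ(1 − 1/ρ₂)S₂ + λ(1 − 1/ρ₁)S₁ ) ≤ (ρ₁/2)W₁ + (ρ₂/2)W₂ + λ(r + C_F q)X₁ + μ(D + q)X₂ + J, then (2 − 1/γ)(λX₁² + μX₂²) + μ(1 − 1/ρ₂)S₂ + λ(1 − 1/ρ₁)S₁ ≤ ρ₁W₁ + ρ₂W₂ + 2J + γ·[ λ((1+α₁)r² + (1 + 1/α₁)C_F² q²) + μ((1+α₂)D² + (1 + 1/α₂)q²) ]. -/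
theorem stmt_8 (lam mu C_F γ ρ₁ ρ₂ α₁ α₂ X₁ X₂ S₁ S₂ W₁ W₂ r q D J : ℝ)
    (hlam : 0 < lam) (hmu : 0 < mu) (hCF : 0 ≤ C_F) (hγ : 1 / 2 ≤ γ)
    (hρ₁ : 1 ≤ ρ₁) (hρ₂ : 1 ≤ ρ₂) (hα₁ : 0 < α₁) (hα₂ : 0 < α₂)
    (hX₁ : 0 ≤ X₁) (hX₂ : 0 ≤ X₂) (hS₁ : 0 ≤ S₁) (hS₂ : 0 ≤ S₂)
    (hW₁ : 0 ≤ W₁) (hW₂ : 0 ≤ W₂) (hr : 0 ≤ r) (hq : 0 ≤ q) (hD : 0 ≤ D)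
    (h : lam * X₁ ^ 2 + mu * X₂ ^ 2
        + (1 / 2) * (mu * (1 - 1 / ρ₂) * S₂ + lam * (1 - 1 / ρ₁) * S₁)
      ≤ (ρ₁ / 2) * W₁ + (ρ₂ / 2) * W₂
        + lam * (r + C_F * q) * X₁ + mu * (D + q) * X₂ + J) :
    (2 - 1 / γ) * (lam * X₁ ^ 2 + mu * X₂ ^ 2)
        + mu * (1 - 1 / ρ₂) * S₂ + lam * (1 - 1 / ρ₁) * S₁
      ≤ ρ₁ * W₁ + ρ₂ * W₂ + 2 * J
        + γ * (lam * ((1 + α₁) * r ^ 2 + (1 + 1 / α₁) * C_F ^ 2 * q ^ 2)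
             + mu * ((1 + α₂) * D ^ 2 + (1 + 1 / α₂) * q ^ 2)) := by
  have hγ0 : 0 < γ := by linarith
  have hγ0' : γ ≠ 0 := ne_of_gt hγ0
  have hα₁' : α₁ ≠ 0 := ne_of_gt hα₁
  have hα₂' : α₂ ≠ 0 := ne_of_gt hα₂
  have y1 : 2 * ((r + C_F * q) * X₁) ≤ γ * (r + C_F * q) ^ 2 + (1 / γ) * X₁ ^ 2 := by
    rw [← sub_nonneg]
    have e : γ * (r + C_F * q) ^ 2 + (1 / γ) * X₁ ^ 2 - 2 * ((r + C_F * q) * X₁)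
        = (γ * (r + C_F * q) - X₁) ^ 2 / γ := by field_simp; ring
    rw [e]; positivity
  have y2 : 2 * ((D + q) * X₂) ≤ γ * (D + q) ^ 2 + (1 / γ) * X₂ ^ 2 := by
    rw [← sub_nonneg]
    have e : γ * (D + q) ^ 2 + (1 / γ) * X₂ ^ 2 - 2 * ((D + q) * X₂)
        = (γ * (D + q) - X₂) ^ 2 / γ := by field_simp; ring
    rw [e]; positivity
  have s1 : (r + C_F * q) ^ 2 ≤ (1 + α₁) * r ^ 2 + (1 + 1 / α₁) * C_F ^ 2 * q ^ 2 := by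
    rw [← sub_nonneg]
    have e : (1 + α₁) * r ^ 2 + (1 + 1 / α₁) * C_F ^ 2 * q ^ 2 - (r + C_F * q) ^ 2
        = (α₁ * r - C_F * q) ^ 2 / α₁ := by field_simp; ring
    rw [e]; positivity
  have s2 : (D + q) ^ 2 ≤ (1 + α₂) * D ^ 2 + (1 + 1 / α₂) * q ^ 2 := by
    rw [← sub_nonneg]
    have e : (1 + α₂) * D ^ 2 + (1 + 1 / α₂) * q ^ 2 - (D + q) ^ 2
        = (α₂ * D - q) ^ 2 / α₂ := by field_simp; ring
    rw [e]; positivity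
  nlinarith [mul_le_mul_of_nonneg_left y1 hlam.le, mul_le_mul_of_nonneg_left y2 hmu.le,
    mul_le_mul_of_nonneg_left s1 (mul_nonneg hγ0.le hlam.le),
    mul_le_mul_of_nonneg_left s2 (mul_nonneg hγ0.le hmu.le), h]
end

section
/- Let λ, μ > 0, C_F ≥ 0, ζ ≥ 1/2, ρ₁ ≥ 1, and ε, ρ₂ ≥ 1 with 1 − 1/ε − 1/ρ₂ ≥ 0, and β₁, β₂ > 0 be real numbers; let X₁, X₂, S₁, S₂, W₁, W₂, r, q, d, P ≥ 0 be nonnegative reals and J a real number. If λX₁² + μX₂² + (1/2)( μ(1 − 1/ρ₂)S₂ + λ(1 − 1/ρ₁)S₁ ) ≤ (ρ₁/2)W₁ + (ρ₂/2)W₂ + (μ/2)(S₂/ε + ε d²) + (λ(r + C_F q) + μP)X₁ + μ q X₂ + J, then (2 − 1/ζ)(λX₁² + μX₂²) + μ(1 − 1/ε − 1/ρ₂)S₂ + λ(1 − 1/ρ₁)S₁ ≤ ρ₁W₁ + ρ₂W₂ + ε μ d² + 2J + ζ·[ λ( (1+β₁)((1+β₂)r² + (1 + 1/β₂)C_F²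 q²) + (1 + 1/β₁)(μ²/λ²)P² ) + μ q² ]. -/
/-!
Double the energy estimate and absorb the two linear terms on its right-hand side by Young's
inequality with weight `ζ`: the term `μ q X₂` costs `X₂²/ζ` and `ζ q²`, and the term
`(λ(r + C_F q) + μ P) X₁` costs `X₁²/ζ` and `ζ (λ(r + C_F q) + μ P)² / λ`. The square of the
residual is then split by the elementary inequality `(a + b)² ≤ (1 + β) a² + (1 + 1/β) b²`,
first with `β₁` between the two residuals and then with `β₂` inside the equilibrium part.
-/

section OrderedField

variable {K : Type*} [Field K] [LinearOrder K] [IsStrictOrderedRing K]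

theorem two_mul_le_mul_sq_add_sq_div {t : K} (ht : 0 < t) (x y : K) :
    2 * x * y ≤ t * x ^ 2 + y ^ 2 / t := by
  have key : t * x ^ 2 + y ^ 2 / t - 2 * x * y = (t * x - y) ^ 2 / t := by
    field_simp
    ring
  have : 0 ≤ (t * x - y) ^ 2 / t := by positivity
  linarith

theorem add_sq_le_one_add_mul_sq_add {β : K} (hβ : 0 < β) (a b : K) :
    (a + b) ^ 2 ≤ (1 + β) * a ^ 2 + (1 + 1 / β) * b ^ 2 := by
  have := two_mul_le_mul_sq_add_sq_div hβ a b
  calc (a + b) ^ 2 = a ^ 2 + 2 * a * b + b ^ 2 := by ring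
    _ ≤ a ^ 2 + (β * a ^ 2 + b ^ 2 / β) + b ^ 2 := by gcongr
    _ = (1 + β) * a ^ 2 + (1 + 1 / β) * b ^ 2 := by ring

theorem sq_residual_le {lam β₁ β₂ : K} (hlam : 0 < lam) (hβ₁ : 0 < β₁) (hβ₂ : 0 < β₂)
    (mu C_F r q P : K) :
    (lam * (r + C_F * q) + mu * P) ^ 2
      ≤ lam ^ 2 * ((1 + β₁) * ((1 + β₂) * r ^ 2 + (1 + 1 / β₂) * C_F ^ 2 * q ^ 2)
          + (1 + 1 / β₁) * (mu ^ 2 / lam ^ 2) * P ^ 2) := by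
  have hsplit := add_sq_le_one_add_mul_sq_add hβ₂ r (C_F * q)
  calc (lam * (r + C_F * q) + mu * P) ^ 2
      ≤ (1 + β₁) * (lam ^ 2 * (r + C_F * q) ^ 2) + (1 + 1 / β₁) * (mu * P) ^ 2 := by
        simpa only [mul_pow] using add_sq_le_one_add_mul_sq_add hβ₁ (lam * (r + C_F * q)) (mu * P)
    _ ≤ (1 + β₁) * (lam ^ 2 * ((1 + β₂) * r ^ 2 + (1 + 1 / β₂) * (C_F * q) ^ 2))
          + (1 + 1 / β₁) * (mu * P) ^ 2 := by gcongr
    _ = _ := by field_simp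

theorem two_mul_le_of_sq_le_mul {lam ζ a B X : K} (hlam : 0 < lam) (hζ : 0 < ζ)
    (ha : a ^ 2 ≤ lam ^ 2 * B) :
    2 * (a * X) ≤ 1 / ζ * (lam * X ^ 2) + ζ * (lam * B) := by
  have ht : 0 < lam / ζ := div_pos hlam hζ
  calc 2 * (a * X) = 2 * X * a := by ring
    _ ≤ lam / ζ * X ^ 2 + a ^ 2 / (lam / ζ) := two_mul_le_mul_sq_add_sq_div ht X a
    _ ≤ lam / ζ * X ^ 2 + lam ^ 2 * B / (lam / ζ) := by gcongr
    _ = 1 / ζ * (lam * X ^ 2) + ζ * (lam * B) := by field_simp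

end OrderedField

theorem stmt_9_general (lam mu C_F ζ ρ₁ ρ₂ ε β₁ β₂ X₁ X₂ S₁ S₂ W₁ W₂ r q d P J : ℝ)
    (hlam : 0 < lam) (hmu : 0 < mu) (hζ : 1 / 2 ≤ ζ)
    (hβ₁ : 0 < β₁) (hβ₂ : 0 < β₂)
    (h : lam * X₁ ^ 2 + mu * X₂ ^ 2
        + (1 / 2) * (mu * (1 - 1 / ρ₂) * S₂ + lam * (1 - 1 / ρ₁) * S₁)
      ≤ (ρ₁ / 2) * W₁ + (ρ₂ / 2) * W₂ + (mu / 2) * (S₂ / ε + ε * d ^ 2)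
        + (lam * (r + C_F * q) + mu * P) * X₁ + mu * q * X₂ + J) :
    (2 - 1 / ζ) * (lam * X₁ ^ 2 + mu * X₂ ^ 2)
        + mu * (1 - 1 / ε - 1 / ρ₂) * S₂ + lam * (1 - 1 / ρ₁) * S₁
      ≤ ρ₁ * W₁ + ρ₂ * W₂ + ε * mu * d ^ 2 + 2 * J
        + ζ * (lam * ((1 + β₁) * ((1 + β₂) * r ^ 2 + (1 + 1 / β₂) * C_F ^ 2 * q ^ 2)
                 + (1 + 1 / β₁) * (mu ^ 2 / lam ^ 2) * P ^ 2)
             + mu * q ^ 2) := by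
  have hζ₀ : 0 < ζ := by linarith
  have hX₁ := two_mul_le_of_sq_le_mul (X := X₁) hlam hζ₀ (sq_residual_le hlam hβ₁ hβ₂ mu C_F r q P)
  have hX₂ := two_mul_le_of_sq_le_mul (X := X₂) hmu hζ₀ (mul_pow mu q 2).le
  linear_combination 2 * h + hX₁ + hX₂

theorem stmt_9 (lam mu C_F ζ ρ₁ ρ₂ ε β₁ β₂ X₁ X₂ S₁ S₂ W₁ W₂ r q d P J : ℝ)
    (hlam : 0 < lam) (hmu : 0 < mu) (hCF : 0 ≤ C_F) (hζ : 1 / 2 ≤ ζ)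
    (hρ₁ : 1 ≤ ρ₁) (hρ₂ : 1 ≤ ρ₂) (hε : 1 ≤ ε)
    (hερ : 0 ≤ 1 - 1 / ε - 1 / ρ₂)
    (hβ₁ : 0 < β₁) (hβ₂ : 0 < β₂)
    (hX₁ : 0 ≤ X₁) (hX₂ : 0 ≤ X₂) (hS₁ : 0 ≤ S₁) (hS₂ : 0 ≤ S₂)
    (hW₁ : 0 ≤ W₁) (hW₂ : 0 ≤ W₂) (hr : 0 ≤ r) (hq : 0 ≤ q)
    (hd : 0 ≤ d) (hP : 0 ≤ P)
    (h : lam * X₁ ^ 2 + mu * X₂ ^ 2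
        + (1 / 2) * (mu * (1 - 1 / ρ₂) * S₂ + lam * (1 - 1 / ρ₁) * S₁)
      ≤ (ρ₁ / 2) * W₁ + (ρ₂ / 2) * W₂ + (mu / 2) * (S₂ / ε + ε * d ^ 2)
        + (lam * (r + C_F * q) + mu * P) * X₁ + mu * q * X₂ + J) :
    (2 - 1 / ζ) * (lam * X₁ ^ 2 + mu * X₂ ^ 2)
        + mu * (1 - 1 / ε - 1 / ρ₂) * S₂ + lam * (1 - 1 / ρ₁) * S₁
      ≤ ρ₁ * W₁ + ρ₂ * W₂ + ε * mu * d ^ 2 + 2 * J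
        + ζ * (lam * ((1 + β₁) * ((1 + β₂) * r ^ 2 + (1 + 1 / β₂) * C_F ^ 2 * q ^ 2)
                 + (1 + 1 / β₁) * (mu ^ 2 / lam ^ 2) * P ^ 2)
             + mu * q ^ 2) :=
  stmt_9_general lam mu C_F ζ ρ₁ ρ₂ ε β₁ β₂ X₁ X₂ S₁ S₂ W₁ W₂ r q d P J hlam hmu hζ hβ₁ hβ₂ h
end

section
/- Let δ > 0 and C_F ≥ 0 be real numbers, and let X₁, X₂, S₁, S₂, r, q, d, P ≥ 0 be nonnegative reals. If X₁² + δX₂² + (1/2)(δS₂ + S₁) ≤ (δ/2)(S₂/2 + 2d²) + (r + C_F q + δP)X₁ + δ q X₂, then X₁² + δX₂² + S₁ + (δ/2)S₂ ≤ 2δd² + (r + C_F q + δP)² + δq². -/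
theorem stmt_13 (δ C_F X₁ X₂ S₁ S₂ r q d P : ℝ)
    (hδ : 0 < δ) (hCF : 0 ≤ C_F)
    (hX₁ : 0 ≤ X₁) (hX₂ : 0 ≤ X₂) (hS₁ : 0 ≤ S₁) (hS₂ : 0 ≤ S₂)
    (hr : 0 ≤ r) (hq : 0 ≤ q) (hd : 0 ≤ d) (hP : 0 ≤ P)
    (h : X₁ ^ 2 + δ * X₂ ^ 2 + (1 / 2) * (δ * S₂ + S₁)
      ≤ (δ / 2) * (S₂ / 2 + 2 * d ^ 2) + (r + C_F * q + δ * P) * X₁ + δ * q * X₂) :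
    X₁ ^ 2 + δ * X₂ ^ 2 + S₁ + (δ / 2) * S₂
      ≤ 2 * δ * d ^ 2 + (r + C_F * q + δ * P) ^ 2 + δ * q ^ 2 := by
  nlinarith [sq_nonneg (X₁ - (r + C_F*q + δ*P)), sq_nonneg (X₂ - q), mul_pos hδ hδ, mul_nonneg hδ.le (sq_nonneg (X₂ - q))]
end
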